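/- Let X be a finite set and let A be a nontrivial abelian subgroup of Sym(X) (A is not the trivial group). Then A is the automorphism group of a coloured graph on X (A ∈ GR) if and only if the following two conditions hold: (1) A is 2-orbit-closed, and (2) for every orbit O of A, if the factor group A_O/A_O^* is an elementary abelian 2-group, then A_O is an elementary abelian 2-group (i.e., a(a(x)) = x for all a ∈ A and x ∈ O). -/
import Mathlib


/-- The orbit of a point `x` under a set `G` of permutations of `X`. -/
def orbitOf {X : Type*} (G : Set (Equiv.Perm X)) (x : X) : Set X :=
  {y | ∃ a ∈ G, a x = y}

/-- A permutation `σ` is 2-orbit-compatible with `G` if for every pair of orbits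
`O` and `Q` of `G` there is an element of `G` agreeing with `σ` on `O ∪ Q`. -/
def TwoOrbitCompatible {X : Type*} (G : Set (Equiv.Perm X)) (σ : Equiv.Perm X) : Prop :=
  ∀ x y : X, ∃ a ∈ G, ∀ z ∈ orbitOf G x ∪ orbitOf G y, σ z = a z

/-- A subgroup `A ≤ Sym(X)` is 2-orbit-closed if every permutation that is
2-orbit-compatible with `A` belongs to `A`. -/
def TwoOrbitClosed {X : Type*} (A : Subgroup (Equiv.Perm X)) : Prop :=
  ∀ σ : Equiv.Perm X, TwoOrbitCompatible (A : Set (Equiv.Perm X)) σ → σ ∈ A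

/-- `A` is precisely the automorphism group of the `k`-coloured graph `γ` on `X`. -/
def IsColGraphAutGroup {X : Type*} {k : ℕ} (γ : Sym2 X → Fin k)
    (A : Subgroup (Equiv.Perm X)) : Prop :=
  ∀ σ : Equiv.Perm X, σ ∈ A ↔ ∀ x y : X, x ≠ y → γ s(σ x, σ y) = γ s(x, y)

/-- `A ∈ GR`: `A` is the automorphism group of some coloured graph on `X`. -/
def InGR {X : Type*} (A : Subgroup (Equiv.Perm X)) : Prop :=
  ∃ k : ℕ, 1 ≤ k ∧ ∃ γ : Sym2 X → Fin k, IsColGraphAutGroup γ A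

/-- `A ∈ GR(4)`: `A` is the automorphism group of some 4-coloured graph on `X`. -/
def InGR4 {X : Type*} (A : Subgroup (Equiv.Perm X)) : Prop :=
  ∃ γ : Sym2 X → Fin 4, IsColGraphAutGroup γ A

/-- The factor group `A_O / A_O^*` is an elementary abelian 2-group: for every `a ∈ A`,
the restriction of `a²` to `O` is the restriction of some element of `A` that fixes
every point outside `O`. -/
def FactorIsElem2 {X : Type*} (A : Subgroup (Equiv.Perm X)) (O : Set X) : Prop :=
  ∀ a ∈ A, ∃ b ∈ A, (∀ z ∈ O, b z = a (a z)) ∧ ∀ z ∉ O, b z = z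

section AuxGR

variable {X : Type*} {A : Subgroup (Equiv.Perm X)}

lemma commA (hab : ∀ a ∈ A, ∀ b ∈ A, a * b = b * a)
    {a b : Equiv.Perm X} (ha : a ∈ A) (hb : b ∈ A) (z : X) :
    a (b z) = b (a z) := by
  have h : a * b = b * a := hab a ha b hb
  have h2 : (a * b) z = (b * a) z := by rw [h]
  simpa [Equiv.Perm.mul_apply] using h2

lemma orb_self (x : X) : x ∈ orbitOf (A : Set (Equiv.Perm X)) x :=
  ⟨1, A.one_mem, rfl⟩

lemma orb_act {a : Equiv.Perm X} (ha : a ∈ A) {x z : X}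
    (hz : z ∈ orbitOf (A : Set (Equiv.Perm X)) x) :
    a z ∈ orbitOf (A : Set (Equiv.Perm X)) x := by
  obtain ⟨g, hg, rfl⟩ := hz
  exact ⟨a * g, A.mul_mem ha hg, rfl⟩

lemma orb_symm {x y : X} (h : y ∈ orbitOf (A : Set (Equiv.Perm X)) x) :
    x ∈ orbitOf (A : Set (Equiv.Perm X)) y := by
  obtain ⟨g, hg, rfl⟩ := h
  exact ⟨g⁻¹, A.inv_mem hg, by simp⟩

lemma orb_trans {x y z : X} (hz : z ∈ orbitOf (A : Set (Equiv.Perm X)) y)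
    (hy : y ∈ orbitOf (A : Set (Equiv.Perm X)) x) :
    z ∈ orbitOf (A : Set (Equiv.Perm X)) x := by
  obtain ⟨g, hg, rfl⟩ := hz
  obtain ⟨h, hh, rfl⟩ := hy
  exact ⟨g * h, A.mul_mem hg hh, rfl⟩

lemma orb_eq {x y : X} (h : y ∈ orbitOf (A : Set (Equiv.Perm X)) x) :
    orbitOf (A : Set (Equiv.Perm X)) y = orbitOf (A : Set (Equiv.Perm X)) x :=
  Set.ext fun _ => ⟨fun hz => orb_trans hz h, fun hz => orb_trans hz (orb_symm h)⟩

lemma exists_moved (hnt : A ≠ ⊥) : ∃ e ∈ A, ∃ z : X, e z ≠ z := by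
  by_contra h
  push_neg at h
  apply hnt
  rw [Subgroup.eq_bot_iff_forall]
  intro a ha
  ext z
  simp [h a ha z]

lemma winv (hab : ∀ a ∈ A, ∀ b ∈ A, a * b = b * a)
    {g h : Equiv.Perm X} (hg : g ∈ A) (hh : h ∈ A) {x : X} (hx : g x = h x) :
    g⁻¹ x = h⁻¹ x := by
  calc g⁻¹ x = g⁻¹ (h⁻¹ (h x)) := by simp
  _ = g⁻¹ (h⁻¹ (g x)) := by rw [← hx]
  _ = h⁻¹ (g⁻¹ (g x)) := commA hab (A.inv_mem hg) (A.inv_mem hh) _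
  _ = h⁻¹ x := by simp

end AuxGR

section Steps

variable {X : Type*} {A : Subgroup (Equiv.Perm X)} {σ : Equiv.Perm X}

/-- Step 1: σ preserves orbits. -/
lemma step1 (hnt : A ≠ ⊥)
    (hP : ∀ x y : X, x ≠ y → ∃ a ∈ A, (a x = σ x ∧ a y = σ y) ∨ (a x = σ y ∧ a y = σ x))
    (x : X) : ∃ b ∈ A, b x = σ x := by
  by_cases h : ∃ a ∈ A, a x ≠ x
  · obtain ⟨a, ha, hax⟩ := h
    obtain ⟨c, hc, hcase⟩ := hP x (a x) (fun hh => hax hh.symm)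
    rcases hcase with ⟨h1, _⟩ | ⟨_, h2⟩
    · exact ⟨c, hc, h1⟩
    · exact ⟨c * a, A.mul_mem hc ha, h2⟩
  · push_neg at h
    obtain ⟨e, he, z, hez⟩ := exists_moved hnt
    have hzx : z ≠ x := by
      intro hzx; rw [hzx] at hez; exact hez (h e he)
    have hezx : e z ≠ x := by
      intro hh
      have : z = e⁻¹ x := by rw [← hh]; simp
      rw [h e⁻¹ (A.inv_mem he)] at this
      exact hzx this
    have key : σ x = x := by
      obtain ⟨c, hc, hcase⟩ := hP x z (fun hh => hzx hh.symm)
      rcases hcase with ⟨h1, _⟩ | ⟨h1, _⟩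
      · rw [← h1, h c hc]
      · -- c x = σ z, so σ z = x
        have hσz : σ z = x := by rw [← h1, h c hc]
        obtain ⟨d, hd, hdcase⟩ := hP x (e z) (fun hh => hezx hh.symm)
        rcases hdcase with ⟨h2, _⟩ | ⟨h2, _⟩
        · rw [← h2, h d hd]
        · have hσez : σ (e z) = x := by rw [← h2, h d hd]
          exact absurd (σ.injective (hσz.trans hσez.symm)) (fun hh => hez hh.symm)
    exact ⟨1, A.one_mem, by simpa using key.symm⟩

/-- Step 1.5: cross pairs between distinct orbits agree in order. -/
lemma step15 (hnt : A ≠ ⊥)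
    (hP : ∀ x y : X, x ≠ y → ∃ a ∈ A, (a x = σ x ∧ a y = σ y) ∨ (a x = σ y ∧ a y = σ x))
    {u v : X} (hv : v ∉ orbitOf (A : Set (Equiv.Perm X)) u) :
    ∃ c ∈ A, c u = σ u ∧ c v = σ v := by
  have huv : u ≠ v := fun h => hv (h ▸ orb_self u)
  obtain ⟨c, hc, hcase⟩ := hP u v huv
  rcases hcase with ⟨h1, h2⟩ | ⟨h1, h2⟩
  · exact ⟨c, hc, h1, h2⟩
  · exfalso
    obtain ⟨b, hb, hbv⟩ := step1 hnt hP v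
    -- σ v = c u ∈ Orb u, σ v = b v ∈ Orb v
    have h3 : σ v ∈ orbitOf (A : Set (Equiv.Perm X)) u := ⟨c, hc, h1⟩
    have h4 : σ v ∈ orbitOf (A : Set (Equiv.Perm X)) v := ⟨b, hb, hbv⟩
    exact hv (orb_trans (orb_symm h4) h3)

end Steps

section Steps2

variable {X : Type*} {A : Subgroup (Equiv.Perm X)} {σ : Equiv.Perm X}

/-- Step 2: on each orbit, σ is of translation type or inversion type. -/
lemma step2 (hnt : A ≠ ⊥) (hab : ∀ a ∈ A, ∀ b ∈ A, a * b = b * a)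
    (hP : ∀ x y : X, x ≠ y → ∃ a ∈ A, (a x = σ x ∧ a y = σ y) ∨ (a x = σ y ∧ a y = σ x))
    (x : X) : ∃ b ∈ A, (∀ g ∈ A, σ (g x) = b (g x)) ∨ (∀ g ∈ A, σ (g x) = b (g⁻¹ x)) := by
  obtain ⟨b, hb, hbx⟩ := step1 hnt hP x
  have hpt : ∀ g ∈ A, σ (g x) = b (g x) ∨ σ (g x) = b (g⁻¹ x) := by
    intro g hg
    by_cases hgx : g x = x
    · have hginv : g⁻¹ x = x := by
        conv_lhs => rw [← hgx]
        simp
      left; rw [hgx, ← hbx]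
    · obtain ⟨c, hc, hcase⟩ := hP x (g x) (fun h => hgx h.symm)
      rcases hcase with ⟨h1, h2⟩ | ⟨h1, h2⟩
      · left
        rw [← h2]
        have hcx : c x = b x := by rw [h1, ← hbx]
        calc c (g x) = g (c x) := commA hab hc hg x
        _ = g (b x) := by rw [hcx]
        _ = b (g x) := commA hab hg hb x
      · right
        rw [← h1]
        -- c (g x) = σ x = b x  ⇒  c x = g⁻¹ (b x) = b (g⁻¹ x)
        have h3 : g (c x) = b x := by rw [← commA hab hc hg x, h2, ← hbx]
        have h4 : c x = g⁻¹ (b x) := by rw [← h3]; simp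
        rw [h4]
        exact commA hab (A.inv_mem hg) hb x
  by_cases hall : ∀ g ∈ A, σ (g x) = b (g⁻¹ x)
  · exact ⟨b, hb, Or.inr hall⟩
  · push_neg at hall
    obtain ⟨g0, hg0, hσg0'⟩ := hall
    have hσg0 : σ (g0 x) = b (g0 x) := (hpt g0 hg0).resolve_right hσg0'
    have hne0 : g0 x ≠ g0⁻¹ x := by
      intro hh; exact hσg0' (hσg0.trans (by rw [hh]))
    refine ⟨b, hb, Or.inl ?_⟩
    intro g hg
    rcases hpt g hg with h | hr
    · exact h
    by_cases hgg : g x = g⁻¹ x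
    · rw [hr, ← hgg]
    exfalso
    have hne_pts : g0 x ≠ g x := by
      intro hEq
      have : b (g0 x) = b (g⁻¹ x) := by rw [← hσg0, hEq, hr]
      exact hgg (hEq ▸ b.injective this)
    obtain ⟨d, hd, hcase⟩ := hP (g0 x) (g x) hne_pts
    rcases hcase with ⟨hd1, hd2⟩ | ⟨hd1, hd2⟩
    · -- ordered
      have hdx : d x = b x := by
        have e1 : g0 (d x) = g0 (b x) := by
          rw [← commA hab hd hg0 x, ← commA hab hb hg0 x, hd1, hσg0]
        exact g0.injective e1
      have e2 : b (g x) = b (g⁻¹ x) := by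
        rw [commA hab hb hg x, ← hdx, ← commA hab hd hg x, hd2]; exact hr
      exact hgg (b.injective e2)
    · -- crossed : d (g0 x) = σ (g x) = b (g⁻¹ x), d (g x) = σ (g0 x) = b (g0 x)
      have hdx : d x = g⁻¹ (b (g0 x)) := by
        have e1 : g (d x) = b (g0 x) := by rw [← commA hab hd hg x, hd2, hσg0]
        rw [← e1]; simp
      have e2 : b (g⁻¹ (g0 (g0 x))) = b (g⁻¹ x) := by
        calc b (g⁻¹ (g0 (g0 x))) = g⁻¹ (b (g0 (g0 x))) := (commA hab (A.inv_mem hg) hb _).symm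
        _ = g⁻¹ (g0 (b (g0 x))) := by rw [commA hab hb hg0 _]
        _ = g0 (g⁻¹ (b (g0 x))) := commA hab (A.inv_mem hg) hg0 _
        _ = d (g0 x) := by rw [← hdx, commA hab hd hg0 x]
        _ = b (g⁻¹ x) := by rw [hd1, hr]
      have e3 : g0 (g0 x) = x := Equiv.injective g⁻¹ (b.injective e2)
      have e4 : g0⁻¹ x = g0 x := by
        conv_lhs => rw [← e3]
        simp
      exact hne0 e4.symm
end Steps2

section Steps3

variable {X : Type*} {A : Subgroup (Equiv.Perm X)} {σ : Equiv.Perm X}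

/-- Step 3: if σ is of inversion type on the orbit of y, and q is in another orbit,
then for each a there is d ∈ A fixing q with d y = a² y. -/
lemma step3 (hnt : A ≠ ⊥) (hab : ∀ a ∈ A, ∀ b ∈ A, a * b = b * a)
    (hP : ∀ x y : X, x ≠ y → ∃ a ∈ A, (a x = σ x ∧ a y = σ y) ∨ (a x = σ y ∧ a y = σ x))
    {y : X} {c : Equiv.Perm X} (hc : c ∈ A)
    (hinv : ∀ g ∈ A, σ (g y) = c (g⁻¹ y))
    {q : X} (hq : q ∉ orbitOf (A : Set (Equiv.Perm X)) y)
    {a : Equiv.Perm X} (ha : a ∈ A) :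
    ∃ d ∈ A, d q = q ∧ d y = a (a y) := by
  have hyq : y ∉ orbitOf (A : Set (Equiv.Perm X)) q := fun h => hq (orb_symm h)
  obtain ⟨c0, hc0, hc0q, hc0y⟩ := step15 hnt hP hyq
  have hyq' : (a⁻¹ y) ∉ orbitOf (A : Set (Equiv.Perm X)) q := by
    intro h
    have h2 : a⁻¹ y ∈ orbitOf (A : Set (Equiv.Perm X)) y := ⟨a⁻¹, A.inv_mem ha, rfl⟩
    exact hyq (orb_trans (orb_symm h2) h)
  obtain ⟨c1, hc1, hc1q, hc1y⟩ := step15 hnt hP hyq'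
  have h1 : σ y = c y := by
    have := hinv 1 A.one_mem
    simpa using this
  have h2 : σ (a⁻¹ y) = c (a y) := by
    have := hinv a⁻¹ (A.inv_mem ha)
    simpa using this
  refine ⟨c0⁻¹ * c1, A.mul_mem (A.inv_mem hc0) hc1, ?_, ?_⟩
  · show c0⁻¹ (c1 q) = q
    rw [hc1q, ← hc0q]
    simp
  · show c0⁻¹ (c1 y) = a (a y)
    have h3 : c1 y = a (c (a y)) := by
      have hcm : c1 (a⁻¹ y) = a⁻¹ (c1 y) := commA hab hc1 (A.inv_mem ha) y
      have h4 : a⁻¹ (c1 y) = c (a y) := by rw [← hcm, hc1y, h2]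
      rw [← h4]; simp
    have h5 : c0⁻¹ (c y) = y := by rw [← h1, ← hc0y]; simp
    rw [h3]
    calc c0⁻¹ (a (c (a y))) = a (c0⁻¹ (c (a y))) := commA hab (A.inv_mem hc0) ha _
    _ = a (c (c0⁻¹ (a y))) := by rw [commA hab (A.inv_mem hc0) hc _]
    _ = a (c (a (c0⁻¹ y))) := by rw [commA hab (A.inv_mem hc0) ha y]
    _ = a (a (c (c0⁻¹ y))) := by rw [commA hab hc ha _]
    _ = a (a (c0⁻¹ (c y))) := by rw [commA hab (A.inv_mem hc0) hc y]
    _ = a (a y) := by rw [h5]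

/-- Step 4: every orbit is of translation type. -/
lemma step4 (hnt : A ≠ ⊥) (hab : ∀ a ∈ A, ∀ b ∈ A, a * b = b * a)
    (h1 : TwoOrbitClosed A)
    (h2 : ∀ x : X, FactorIsElem2 A (orbitOf (A : Set (Equiv.Perm X)) x) →
          ∀ a ∈ A, ∀ z ∈ orbitOf (A : Set (Equiv.Perm X)) x, a (a z) = z)
    (hP : ∀ x y : X, x ≠ y → ∃ a ∈ A, (a x = σ x ∧ a y = σ y) ∨ (a x = σ y ∧ a y = σ x))
    (y : X) : ∃ c ∈ A, ∀ g ∈ A, σ (g y) = c (g y) := by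
  obtain ⟨b, hb, hcase⟩ := step2 hnt hab hP y
  rcases hcase with h | hinv
  · exact ⟨b, hb, h⟩
  · -- inversion type: establish FactorIsElem2 on Orb y
    classical
    have hfac : FactorIsElem2 A (orbitOf (A : Set (Equiv.Perm X)) y) := by
      intro a ha
      set O := orbitOf (A : Set (Equiv.Perm X)) y with hO
      have hOa : ∀ z ∈ O, a (a z) ∈ O := fun z hz => orb_act ha (orb_act ha hz)
      have hOai : ∀ z ∈ O, a⁻¹ (a⁻¹ z) ∈ O := fun z hz =>
        orb_act (A.inv_mem ha) (orb_act (A.inv_mem ha) hz)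
      let f : X → X := fun z => if z ∈ O then a (a z) else z
      let g : X → X := fun z => if z ∈ O then a⁻¹ (a⁻¹ z) else z
      have hfg : ∀ z, g (f z) = z := by
        intro z
        by_cases hz : z ∈ O
        · simp only [f, g, if_pos hz, if_pos (hOa z hz)]
          simp
        · simp only [f, g, if_neg hz]
      have hgf : ∀ z, f (g z) = z := by
        intro z
        by_cases hz : z ∈ O
        · simp only [f, g, if_pos hz, if_pos (hOai z hz)]
          simp
        · simp only [f, g, if_neg hz]
      let β : Equiv.Perm X := ⟨f, g, hfg, hgf⟩
      have hβapp : ∀ z, β z = if z ∈ O then a (a z) else z := fun z => rfl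
      have hβc : TwoOrbitCompatible (A : Set (Equiv.Perm X)) β := by
        intro p q
        have horbsub : ∀ w : X, w ∈ O →
            orbitOf (A : Set (Equiv.Perm X)) w = O := fun w hw => orb_eq hw
        have hdisj : ∀ w : X, w ∉ O → ∀ z ∈ orbitOf (A : Set (Equiv.Perm X)) w, z ∉ O := by
          intro w hw z hzw hzO
          exact hw (orb_trans (orb_symm hzw) hzO)
        by_cases hp : p ∈ O <;> by_cases hq' : q ∈ O
        · -- both in O
          refine ⟨a * a, A.mul_mem ha ha, ?_⟩
          intro z hz
          have hzO : z ∈ O := by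
            rcases hz with hz | hz
            · exact (horbsub p hp) ▸ hz
            · exact (horbsub q hq') ▸ hz
          rw [hβapp z, if_pos hzO]
          rfl
        · -- p ∈ O, q ∉ O
          obtain ⟨d, hd, hdq, hdy⟩ := step3 hnt hab hP hb hinv (hO ▸ hq') ha
          refine ⟨d, hd, ?_⟩
          intro z hz
          rcases hz with hz | hz
          · -- z ∈ Orb p = O = Orb y
            have hzO : z ∈ O := (horbsub p hp) ▸ hz
            obtain ⟨h', hh', hh'y⟩ := id hzO
            rw [hβapp, if_pos hzO, ← hh'y]
            calc a (a (h' y)) = a (h' (a y)) := by rw [commA hab ha hh' y]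
            _ = h' (a (a y)) := commA hab ha hh' _
            _ = h' (d y) := by rw [hdy]
            _ = d (h' y) := commA hab hh' hd y
          · -- z ∈ Orb q, disjoint from O
            have hzO : z ∉ O := hdisj q hq' z hz
            obtain ⟨h', hh', rfl⟩ := hz
            rw [hβapp, if_neg hzO]
            calc h' q = h' (d q) := by rw [hdq]
            _ = d (h' q) := commA hab hh' hd q
        · -- p ∉ O, q ∈ O
          obtain ⟨d, hd, hdq, hdy⟩ := step3 hnt hab hP hb hinv (hO ▸ hp) ha
          refine ⟨d, hd, ?_⟩
          intro z hz
          rcases hz with hz | hz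
          · have hzO : z ∉ O := hdisj p hp z hz
            obtain ⟨h', hh', rfl⟩ := hz
            rw [hβapp, if_neg hzO]
            calc h' p = h' (d p) := by rw [hdq]
            _ = d (h' p) := commA hab hh' hd p
          · have hzO : z ∈ O := (horbsub q hq') ▸ hz
            obtain ⟨h', hh', hh'y⟩ := id hzO
            rw [hβapp, if_pos hzO, ← hh'y]
            calc a (a (h' y)) = a (h' (a y)) := by rw [commA hab ha hh' y]
            _ = h' (a (a y)) := commA hab ha hh' _
            _ = h' (d y) := by rw [hdy]
            _ = d (h' y) := commA hab hh' hd y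
        · -- neither in O
          refine ⟨1, A.one_mem, ?_⟩
          intro z hz
          have hzO : z ∉ O := by
            rcases hz with hz | hz
            · exact hdisj p hp z hz
            · exact hdisj q hq' z hz
          rw [hβapp, if_neg hzO]
          simp
      have hβA : β ∈ A := h1 β hβc
      exact ⟨β, hβA, fun z hz => by rw [hβapp, if_pos hz], fun z hz => by rw [hβapp, if_neg hz]⟩
    have helem := h2 y hfac
    refine ⟨b, hb, fun g hg => ?_⟩
    rw [hinv g hg]
    congr 1
    have hgy : g (g y) = y := helem g hg y (orb_self y)
    have h5 : g y = g⁻¹ y := by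
      have h6 := congrArg (fun w => g⁻¹ w) hgy
      simpa using h6
    exact h5.symm

end Steps3

section MainLemma

variable {X : Type*} {A : Subgroup (Equiv.Perm X)}

/-- The crux: a permutation preserving all orbits on pairs belongs to A. -/
lemma main_lemma (hnt : A ≠ ⊥) (hab : ∀ a ∈ A, ∀ b ∈ A, a * b = b * a)
    (h1 : TwoOrbitClosed A)
    (h2 : ∀ x : X, FactorIsElem2 A (orbitOf (A : Set (Equiv.Perm X)) x) →
          ∀ a ∈ A, ∀ z ∈ orbitOf (A : Set (Equiv.Perm X)) x, a (a z) = z)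
    {σ : Equiv.Perm X}
    (hP : ∀ x y : X, x ≠ y → ∃ a ∈ A, (a x = σ x ∧ a y = σ y) ∨ (a x = σ y ∧ a y = σ x)) :
    σ ∈ A := by
  apply h1
  intro p q
  obtain ⟨cp, hcp, hcp'⟩ := step4 hnt hab h1 h2 hP p
  by_cases hq : q ∈ orbitOf (A : Set (Equiv.Perm X)) p
  · refine ⟨cp, hcp, ?_⟩
    intro z hz
    have hzp : z ∈ orbitOf (A : Set (Equiv.Perm X)) p := by
      rcases hz with hz | hz
      · exact hz
      · exact (orb_eq hq) ▸ hz
    obtain ⟨g, hg, rfl⟩ := hzp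
    exact hcp' g hg
  · obtain ⟨cq, hcq, hcq'⟩ := step4 hnt hab h1 h2 hP q
    obtain ⟨c, hc, hcp0, hcq0⟩ := step15 hnt hP hq
    refine ⟨c, hc, ?_⟩
    intro z hz
    rcases hz with hz | hz
    · obtain ⟨g, hg, rfl⟩ := hz
      rw [hcp' g hg]
      have hpp : cp p = c p := by
        have hone := hcp' 1 A.one_mem
        simp only [Equiv.Perm.one_apply] at hone
        rw [← hone, hcp0]
      calc cp (g p) = g (cp p) := commA hab hcp hg p
      _ = g (c p) := by rw [hpp]
      _ = c (g p) := commA hab hg hc p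
    · obtain ⟨g, hg, rfl⟩ := hz
      rw [hcq' g hg]
      have hpp : cq q = c q := by
        have hone := hcq' 1 A.one_mem
        simp only [Equiv.Perm.one_apply] at hone
        rw [← hone, hcq0]
      calc cq (g q) = g (cq q) := commA hab hcq hg q
      _ = g (c q) := by rw [hpp]
      _ = c (g q) := commA hab hg hc q

end MainLemma

section Fwd

variable {X : Type*} {A : Subgroup (Equiv.Perm X)}

open Classical in
/-- The inversion map on the orbit of x, identity elsewhere. -/
noncomputable def invOn (A : Subgroup (Equiv.Perm X)) (x : X) : X → X :=
  fun w => if hw : w ∈ orbitOf (A : Set (Equiv.Perm X)) x then (hw.choose)⁻¹ x else w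

lemma invOn_not {x w : X} (hw : w ∉ orbitOf (A : Set (Equiv.Perm X)) x) :
    invOn A x w = w := dif_neg hw

lemma invOn_eq (hab : ∀ a ∈ A, ∀ b ∈ A, a * b = b * a) {x w : X}
    {g : Equiv.Perm X} (hg : g ∈ A) (hgw : g x = w) :
    invOn A x w = g⁻¹ x := by
  have hw : w ∈ orbitOf (A : Set (Equiv.Perm X)) x := ⟨g, hg, hgw⟩
  have h1 : invOn A x w = (hw.choose)⁻¹ x := dif_pos hw
  rw [h1]
  exact winv hab hw.choose_spec.1 hg (hw.choose_spec.2.trans hgw.symm)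

lemma invOn_invol (hab : ∀ a ∈ A, ∀ b ∈ A, a * b = b * a) (x : X) :
    Function.Involutive (invOn A x) := by
  intro w
  by_cases hw : w ∈ orbitOf (A : Set (Equiv.Perm X)) x
  · obtain ⟨g, hg, hgw⟩ := hw
    rw [invOn_eq hab hg hgw, invOn_eq hab (A.inv_mem hg) rfl]
    simpa using hgw
  · rw [invOn_not hw, invOn_not hw]

/-- Condition (2) follows from being a coloured-graph automorphism group. -/
lemma fwd2 [Fintype X] (hab : ∀ a ∈ A, ∀ b ∈ A, a * b = b * a)
    {k : ℕ} {γ : Sym2 X → Fin k} (hγ : IsColGraphAutGroup γ A) (x : X)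
    (hF : FactorIsElem2 A (orbitOf (A : Set (Equiv.Perm X)) x)) :
    ∀ a ∈ A, ∀ z ∈ orbitOf (A : Set (Equiv.Perm X)) x, a (a z) = z := by
  classical
  set O := orbitOf (A : Set (Equiv.Perm X)) x with hO
  let ι : Equiv.Perm X := (invOn_invol hab x).toPerm
  have hιapp : ∀ w, ι w = invOn A x w := fun w => rfl
  have hιA : ι ∈ A := by
    rw [hγ]
    intro u v huv
    by_cases hu : u ∈ O <;> by_cases hv : v ∈ O
    · -- both in orbit
      obtain ⟨g, hg, hgu⟩ := hu
      obtain ⟨h, hh, hhv⟩ := hv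
      have hc : g⁻¹ * h⁻¹ ∈ A := A.mul_mem (A.inv_mem hg) (A.inv_mem hh)
      have hcv : (g⁻¹ * h⁻¹) v = ι u := by
        show g⁻¹ (h⁻¹ v) = ι u
        rw [hιapp, invOn_eq hab hg hgu, ← hhv]
        simp
      have hcu : (g⁻¹ * h⁻¹) u = ι v := by
        show g⁻¹ (h⁻¹ u) = ι v
        rw [hιapp, invOn_eq hab hh hhv, ← hgu]
        rw [commA hab (A.inv_mem hh) hg x]
        simp
      have hkey := (hγ (g⁻¹ * h⁻¹)).mp hc v u (Ne.symm huv)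
      rw [hcv, hcu] at hkey
      rw [hkey, Sym2.eq_swap]
    · -- u in orbit, v not
      obtain ⟨g, hg, hgu⟩ := hu
      obtain ⟨b, hb, hbO, hbout⟩ := hF g⁻¹ (A.inv_mem hg)
      have hbu : b u = ι u := by
        rw [hbO u ⟨g, hg, hgu⟩, hιapp, invOn_eq hab hg hgu, ← hgu]
        simp
      have hbv : b v = ι v := by
        rw [hbout v hv, hιapp, invOn_not hv]
      have hkey := (hγ b).mp hb u v huv
      rw [hbu, hbv] at hkey
      exact hkey
    · -- v in orbit, u not
      obtain ⟨g, hg, hgv⟩ := hv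
      obtain ⟨b, hb, hbO, hbout⟩ := hF g⁻¹ (A.inv_mem hg)
      have hbv : b v = ι v := by
        rw [hbO v ⟨g, hg, hgv⟩, hιapp, invOn_eq hab hg hgv, ← hgv]
        simp
      have hbu : b u = ι u := by
        rw [hbout u hu, hιapp, invOn_not hu]
      have hkey := (hγ b).mp hb u v huv
      rw [hbu, hbv] at hkey
      exact hkey
    · rw [hιapp, hιapp, invOn_not hu, invOn_not hv]
  intro a ha z hz
  have hcomm : a * ι = ι * a := hab a ha ι hιA
  have hx1 : ι x = x := by
    rw [hιapp, invOn_eq hab A.one_mem (by simp : (1 : Equiv.Perm X) x = x)]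
    simp
  have hx2 : ι (a x) = a⁻¹ x := by
    rw [hιapp, invOn_eq hab ha rfl]
  have heval : a x = a⁻¹ x := by
    have h := congrArg (fun e : Equiv.Perm X => e x) hcomm
    simp only [Equiv.Perm.mul_apply] at h
    rw [hx1, hx2] at h
    exact h
  have hax : a (a x) = x := by
    rw [heval]
    simp
  obtain ⟨g, hg, rfl⟩ := hz
  calc a (a (g x)) = a (g (a x)) := by rw [commA hab ha hg x]
  _ = g (a (a x)) := commA hab ha hg _
  _ = g x := by rw [hax]

end Fwd

/-- A nontrivial abelian subgroup `A ≤ Sym(X)` is the automorphism group of a coloured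
graph on `X` iff (1) `A` is 2-orbit-closed and (2) for every orbit `O` of `A`, if
`A_O / A_O^*` is an elementary abelian 2-group then so is `A_O`. -/
theorem statement0 (X : Type*) [Fintype X] (A : Subgroup (Equiv.Perm X))
    (hnt : A ≠ ⊥) (hab : ∀ a ∈ A, ∀ b ∈ A, a * b = b * a) :
    InGR A ↔
      TwoOrbitClosed A ∧
        ∀ x : X, FactorIsElem2 A (orbitOf (A : Set (Equiv.Perm X)) x) →
          ∀ a ∈ A, ∀ z ∈ orbitOf (A : Set (Equiv.Perm X)) x, a (a z) = z := by
  constructor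
  · rintro ⟨k, hk, γ, hγ⟩
    constructor
    · intro σ hcompat
      rw [hγ]
      intro x y hxy
      obtain ⟨a, ha, hagree⟩ := hcompat x y
      have hx : σ x = a x := hagree x (Set.mem_union_left _ (orb_self x))
      have hy : σ y = a y := hagree y (Set.mem_union_right _ (orb_self y))
      rw [hx, hy]
      exact (hγ a).mp ha x y hxy
    · intro x hF
      exact fwd2 hab hγ x hF
  · rintro ⟨h1, h2⟩
    classical
    obtain ⟨e, he, z0, hez⟩ := exists_moved hnt
    let r : Sym2 X → Sym2 X → Prop := fun p q => ∃ a ∈ A, Sym2.map a p = q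
    have hrefl : ∀ p, r p p := by
      intro p
      refine ⟨1, A.one_mem, ?_⟩
      induction p using Sym2.ind with
      | _ u v => simp [Sym2.map_pair_eq]
    have hsymm : ∀ {p q}, r p q → r q p := by
      rintro p q ⟨a, ha, rfl⟩
      refine ⟨a⁻¹, A.inv_mem ha, ?_⟩
      induction p using Sym2.ind with
      | _ u v => simp [Sym2.map_pair_eq]
    have htrans : ∀ {p q t}, r p q → r q t → r p t := by
      rintro p q t ⟨a, ha, rfl⟩ ⟨b, hb, rfl⟩
      refine ⟨b * a, A.mul_mem hb ha, ?_⟩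
      induction p using Sym2.ind with
      | _ u v => simp [Sym2.map_pair_eq]
    let s : Setoid (Sym2 X) := ⟨r, hrefl, hsymm, htrans⟩
    haveI : DecidableEq (Quotient s) := Classical.decEq _
    let k := Fintype.card (Quotient s)
    let eqv := Fintype.equivFin (Quotient s)
    let γ : Sym2 X → Fin k := fun p => eqv (Quotient.mk s p)
    refine ⟨k, ?_, γ, ?_⟩
    · have hne : Nonempty (Quotient s) := ⟨Quotient.mk s s(z0, z0)⟩
      exact Fintype.card_pos
    · intro σ
      constructor
      · intro hσ u v huv
        have hq : Quotient.mk s s(u, v) = Quotient.mk s s(σ u, σ v) :=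
          Quotient.sound ⟨σ, hσ, by simp [Sym2.map_pair_eq]⟩
        show eqv (Quotient.mk s s(σ u, σ v)) = eqv (Quotient.mk s s(u, v))
        rw [hq]
      · intro hσ
        apply main_lemma hnt hab h1 h2
        intro u v huv
        have hq : Quotient.mk s s(u, v) = Quotient.mk s s(σ u, σ v) :=
          eqv.injective (hσ u v huv) |>.symm
        obtain ⟨a, ha, hmap⟩ := Quotient.exact hq
        rw [Sym2.map_pair_eq] at hmap
        rcases Sym2.eq_iff.mp hmap with ⟨hh1, hh2⟩ | ⟨hh1, hh2⟩
        · exact ⟨a, ha, Or.inl ⟨hh1, hh2⟩⟩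
        · exact ⟨a, ha, Or.inr ⟨hh1, hh2⟩⟩
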